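/- Let H, S : ℝ³ → ℝ be C¹ functions and let Π : ℝ → ℝ³ be differentiable and satisfy Π'(t) = ∇S(Π(t)) × ∇H(Π(t)) − ∇H(Π(t)) × (∇H(Π(t)) × ∇S(Π(t))) for all t. Then H(Π(t)) is constant in t, and t ↦ S(Π(t)) is nondecreasing, with d/dt S(Π(t)) = ‖∇H(Π(t)) × ∇S(Π(t))‖² ≥ 0. -/

import Mathlib

/-!
Along a solution, `d/dt F(Π) = ∇F · Π'` by the chain rule. Both terms of the vector field are
orthogonal to `∇H`, so `H` is conserved. For `S`, the Hamiltonian term `∇S × ∇H` is orthogonal to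
`∇S`, while cyclicity of the triple product turns `−∇S · (∇H × (∇H × ∇S))` into `‖∇H × ∇S‖²`.
-/

open Matrix

noncomputable def euclGrad (f : (Fin 3 → ℝ) → ℝ) (x : Fin 3 → ℝ) : Fin 3 → ℝ :=
  fun i => fderiv ℝ f x (Pi.single i 1)

theorem euclGrad_dotProduct (f : (Fin 3 → ℝ) → ℝ) (x v : Fin 3 → ℝ) :
    euclGrad f x ⬝ᵥ v = fderiv ℝ f x v := by
  conv_rhs => rw [← Finset.univ_sum_single v, map_sum]
  refine Finset.sum_congr rfl fun i _ => ?_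
  rw [euclGrad, mul_comm, ← smul_eq_mul, ← map_smul, ← Pi.single_smul, smul_eq_mul, mul_one]

theorem DifferentiableAt.hasDerivAt_comp_euclGrad {f : (Fin 3 → ℝ) → ℝ} {P : ℝ → Fin 3 → ℝ}
    {v : Fin 3 → ℝ} {t : ℝ} (hf : DifferentiableAt ℝ f (P t)) (hP : HasDerivAt P v t) :
    HasDerivAt (fun s => f (P s)) (euclGrad f (P t) ⬝ᵥ v) t := by
  rw [euclGrad_dotProduct]
  exact hf.hasFDerivAt.comp_hasDerivAt t hP

section MetriplecticField

variable {R : Type*} [CommRing R]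

/-- The metriplectic vector field at a point where `∇H = h` and `∇S = s`. -/
def metriplecticField (h s : Fin 3 → R) : Fin 3 → R :=
  s ⨯₃ h - h ⨯₃ (h ⨯₃ s)

theorem dotProduct_metriplecticField_left (h s : Fin 3 → R) :
    h ⬝ᵥ metriplecticField h s = 0 := by
  rw [metriplecticField, dotProduct_sub, dot_cross_self, dot_self_cross, sub_zero]

theorem dotProduct_metriplecticField_right (h s : Fin 3 → R) :
    s ⬝ᵥ metriplecticField h s = h ⨯₃ s ⬝ᵥ h ⨯₃ s := by
  rw [metriplecticField, dotProduct_sub, dot_self_cross, zero_sub, triple_product_permutation,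
    triple_product_permutation, ← cross_anticomm h s, dotProduct_neg, neg_neg]

end MetriplecticField

/-- For the metriplectic system on `ℝ³`
`Π' = ∇S(Π) × ∇H(Π) − ∇H(Π) × (∇H(Π) × ∇S(Π))` with `H, S` of class `C¹`,
the Hamiltonian `H` is conserved along solutions, and the entropy `S` is
produced: `d/dt S(Π(t)) = ‖∇H × ∇S‖² ≥ 0`, so `t ↦ S(Π(t))` is nondecreasing. -/
theorem stmt_12 (H S : (Fin 3 → ℝ) → ℝ)
    (hH : ContDiff ℝ 1 H) (hS : ContDiff ℝ 1 S)
    (P : ℝ → Fin 3 → ℝ)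
    (hP : ∀ t, HasDerivAt P
      (crossProduct (euclGrad S (P t)) (euclGrad H (P t)) -
        crossProduct (euclGrad H (P t))
          (crossProduct (euclGrad H (P t)) (euclGrad S (P t)))) t) :
    (∀ t, H (P t) = H (P 0)) ∧
    (∀ t, HasDerivAt (fun s => S (P s))
        (crossProduct (euclGrad H (P t)) (euclGrad S (P t)) ⬝ᵥ
          crossProduct (euclGrad H (P t)) (euclGrad S (P t))) t ∧
      0 ≤ crossProduct (euclGrad H (P t)) (euclGrad S (P t)) ⬝ᵥ
          crossProduct (euclGrad H (P t)) (euclGrad S (P t))) ∧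
    Monotone fun t => S (P t) := by
  have hP' : ∀ t, HasDerivAt P (metriplecticField (euclGrad H (P t)) (euclGrad S (P t))) t := hP
  have hHP : ∀ t, HasDerivAt (fun s => H (P s)) 0 t := fun t => by
    simpa only [dotProduct_metriplecticField_left] using
      (hH.differentiable one_ne_zero (P t)).hasDerivAt_comp_euclGrad (hP' t)
  have hSP : ∀ t, HasDerivAt (fun s => S (P s))
      (euclGrad H (P t) ⨯₃ euclGrad S (P t) ⬝ᵥ euclGrad H (P t) ⨯₃ euclGrad S (P t)) t :=
    fun t => by
      simpa only [dotProduct_metriplecticField_right] using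
        (hS.differentiable one_ne_zero (P t)).hasDerivAt_comp_euclGrad (hP' t)
  have hnonneg : ∀ v : Fin 3 → ℝ, 0 ≤ v ⬝ᵥ v := fun v =>
    Finset.sum_nonneg fun i _ => mul_self_nonneg (v i)
  refine ⟨fun t => ?_, fun t => ⟨hSP t, hnonneg _⟩,
    monotone_of_hasDerivAt_nonneg hSP fun t => hnonneg _⟩
  exact is_const_of_deriv_eq_zero (fun s => (hHP s).differentiableAt) (fun s => (hHP s).deriv) t 0
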